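/- Let (r_ℓ)_{ℓ≥1} be a sequence of positive real numbers with r_ℓ → ∞ and r_ℓ/ℓ → 0 as ℓ → ∞. Then there exists a constant C > 0, independent of η₂, such that for every η₂ ∈ (0, √2) there exists L ≥ 1 so that for all integers ℓ ≥ L, all integers m with ℓ − 2r_ℓ ≤ m ≤ ℓ − r_ℓ, and all θ ∈ [0, η₂ (r_ℓ/ℓ)^{1/2}], one has 0 ≤ S_{ℓ,m−1}(θ) − S_{ℓ,m}(θ) ≤ C η₂. -/

import Mathlib

open Real Filter

noncomputable def Qlm (ℓ : ℕ) (m : ℤ) (θ : ℝ) : ℝ :=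
  ((m : ℝ) ^ 2 - 1 / 4) / Real.cos θ ^ 2 - 1 / 4 - (ℓ : ℝ) * ((ℓ : ℝ) + 1)

noncomputable def Slm (ℓ : ℕ) (m : ℤ) (θ : ℝ) : ℝ :=
  ∫ t in (0:ℝ)..θ, Real.sqrt |Qlm ℓ m t|

open MeasureTheory Set

/-!
For small `t`, `Qlm ℓ m t ≈ ℓ(ℓ+1)(t² - A²)` with `1 - A² = m² / (ℓ(ℓ+1))`, and the constraints on
`m` give `A² ≥ (1 + η²/2) r/ℓ`, hence `θ < A` and `θ ≤ η A`. On `[0, θ]` both `Q_{ℓ,m}` and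
`Q_{ℓ,m-1} = Q_{ℓ,m} - (2m-1)/cos² t` are negative, so `√(a + d) - √a ≤ d/√a` with `d ≤ 3ℓ` and
`-Q_{ℓ,m}(t) ≥ ℓ² A (A - t)` bounds the integrand by `3/√(A (A - t))`, whose integral over `[0, θ]`
is at most `6θ/A ≤ 6η`.
-/

lemma Real.sqrt_sub_sqrt_le_div_sqrt {a b : ℝ} (hb : 0 < b) (hab : b ≤ a) :
    √a - √b ≤ (a - b) / √b := by
  rw [le_div_iff₀ (sqrt_pos.mpr hb)]
  nlinarith [sq_sqrt hb.le, sq_sqrt (hb.le.trans hab), sqrt_le_sqrt hab]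

lemma intervalIntegrable_inv_sqrt_sub {A θ : ℝ} (hθ : 0 ≤ θ) (hθA : θ < A) :
    IntervalIntegrable (fun t => (√(A - t))⁻¹) volume 0 θ := by
  refine (ContinuousOn.inv₀ (by fun_prop) fun t ht => ?_).intervalIntegrable
  rw [uIcc_of_le hθ] at ht
  exact (sqrt_pos.mpr (by linarith [ht.2])).ne'

lemma integral_inv_sqrt_sub {A θ : ℝ} (hθ : 0 ≤ θ) (hθA : θ < A) :
    ∫ t in (0:ℝ)..θ, (√(A - t))⁻¹ = 2 * √A - 2 * √(A - θ) := by
  have hpos : ∀ t ∈ uIcc (0:ℝ) θ, 0 < A - t := fun t ht => by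
    rw [uIcc_of_le hθ] at ht
    linarith [ht.2]
  have hderiv : ∀ t ∈ uIcc (0:ℝ) θ,
      HasDerivAt (fun u => -2 * √(A - u)) (√(A - t))⁻¹ t := fun t ht => by
    refine ((((hasDerivAt_id' t).const_sub A).sqrt (hpos t ht).ne').const_mul (-2)).congr_deriv ?_
    field_simp
  rw [intervalIntegral.integral_eq_sub_of_hasDerivAt hderiv
    (intervalIntegrable_inv_sqrt_sub hθ hθA), sub_zero]
  ring

lemma integral_inv_sqrt_sub_le {A θ : ℝ} (hθ : 0 ≤ θ) (hθA : θ < A) :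
    ∫ t in (0:ℝ)..θ, (√(A - t))⁻¹ ≤ 2 * θ / √A := by
  have hA : 0 < √A := sqrt_pos.mpr (hθ.trans_lt hθA)
  rw [integral_inv_sqrt_sub hθ hθA, le_div_iff₀ hA]
  nlinarith [sq_sqrt (hθ.trans hθA.le), sq_sqrt (sub_nonneg.mpr hθA.le), sqrt_nonneg (A - θ)]

lemma one_sub_sq_le_cos_sq (t : ℝ) : 1 - t ^ 2 ≤ cos t ^ 2 := by
  rw [cos_sq']
  linarith [sin_sq_le_sq (x := t)]

lemma Qlm_sub_Qlm_sub_one (ℓ : ℕ) (m : ℤ) (t : ℝ) :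
    Qlm ℓ m t - Qlm ℓ (m - 1) t = (2 * m - 1) / cos t ^ 2 := by
  simp only [Qlm]
  push_cast
  ring

lemma intervalIntegrable_sqrt_abs_Qlm (ℓ : ℕ) (m : ℤ) {θ : ℝ}
    (hθ : θ ∈ Ioo (-(π / 2)) (π / 2)) :
    IntervalIntegrable (fun t => √|Qlm ℓ m t|) volume 0 θ := by
  refine ContinuousOn.intervalIntegrable ?_
  have hsub : uIcc 0 θ ⊆ Ioo (-(π / 2)) (π / 2) :=
    ordConnected_Ioo.uIcc_subset ⟨by linarith [pi_pos], by linarith [pi_pos]⟩ hθ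
  have hcos : ∀ t ∈ uIcc 0 θ, cos t ^ 2 ≠ 0 := fun t ht =>
    pow_ne_zero 2 (cos_pos_of_mem_Ioo (hsub ht)).ne'
  unfold Qlm
  fun_prop (disch := assumption)

lemma Qlm_sub_one_le_Qlm (ℓ : ℕ) {m : ℤ} (hm : 1 ≤ m) (t : ℝ) :
    Qlm ℓ (m - 1) t ≤ Qlm ℓ m t := by
  have hm' : (1 : ℝ) ≤ m := by exact_mod_cast hm
  rw [← sub_nonneg, Qlm_sub_Qlm_sub_one]
  exact div_nonneg (by linarith) (sq_nonneg _)

lemma Qlm_sub_Qlm_sub_one_le {ℓ : ℕ} {m : ℤ} (hm : m ≤ ℓ) {t : ℝ} (ht : t ^ 2 ≤ 1 / 4) :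
    Qlm ℓ m t - Qlm ℓ (m - 1) t ≤ 3 * ℓ := by
  have hm' : (m : ℝ) ≤ ℓ := by exact_mod_cast hm
  have hcos : 3 / 4 ≤ cos t ^ 2 := by linarith [one_sub_sq_le_cos_sq t]
  rw [Qlm_sub_Qlm_sub_one, div_le_iff₀ (by linarith)]
  nlinarith [Nat.cast_nonneg (α := ℝ) ℓ]

/-- The zero of the small-angle approximation `ℓ(ℓ+1)(t² - A²)` of `Qlm ℓ m`. -/
noncomputable def turningPoint (ℓ : ℕ) (m : ℤ) : ℝ := √(1 - (m : ℝ) ^ 2 / (ℓ * (ℓ + 1)))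

lemma Qlm_le_neg_mul_turningPoint {ℓ : ℕ} {m : ℤ} {t : ℝ} (hℓ : 0 < ℓ) (ht0 : 0 ≤ t)
    (htA : t < turningPoint ℓ m) :
    Qlm ℓ m t ≤ -((ℓ : ℝ) ^ 2 * (turningPoint ℓ m * (turningPoint ℓ m - t))) := by
  set A := turningPoint ℓ m
  set P : ℝ := ℓ * (ℓ + 1) with hP
  have hℓ' : (1 : ℝ) ≤ ℓ := by exact_mod_cast hℓ
  have hPpos : 0 < P := by positivity
  have hB : 0 < 1 - (m : ℝ) ^ 2 / P := sqrt_pos.mp (ht0.trans_lt htA)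
  have hA2 : A ^ 2 = 1 - (m : ℝ) ^ 2 / P := sq_sqrt hB.le
  have hm : (m : ℝ) ^ 2 = P * (1 - A ^ 2) := by rw [hA2]; field_simp; ring
  have htA2 : t ^ 2 < A ^ 2 := by nlinarith
  have hu : 0 < 1 - t ^ 2 := by nlinarith [div_nonneg (sq_nonneg (m : ℝ)) hPpos.le]
  have h1 : ((m : ℝ) ^ 2 - 1 / 4) / cos t ^ 2 ≤ (m : ℝ) ^ 2 / (1 - t ^ 2) :=
    div_le_div₀ (sq_nonneg _) (by linarith) hu (one_sub_sq_le_cos_sq t)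
  have h2 : (m : ℝ) ^ 2 / (1 - t ^ 2) ≤ P * (1 - A ^ 2 + t ^ 2) := by
    rw [div_le_iff₀ hu, hm]
    nlinarith [mul_nonneg (mul_nonneg hPpos.le (sq_nonneg t)) (sub_nonneg.mpr htA2.le)]
  have h3 : (ℓ : ℝ) ^ 2 * (A * (A - t)) ≤ P * (A ^ 2 - t ^ 2) := by
    have : A * (A - t) ≤ A ^ 2 - t ^ 2 := by nlinarith
    nlinarith [mul_nonneg (sub_nonneg.mpr htA.le) (add_nonneg (ht0.trans htA.le) ht0)]
  simp only [Qlm, ← hP]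
  linarith

lemma Qlm_neg_of_lt_turningPoint {ℓ : ℕ} {m : ℤ} {t : ℝ} (hℓ : 0 < ℓ) (ht0 : 0 ≤ t)
    (htA : t < turningPoint ℓ m) : Qlm ℓ m t < 0 := by
  have hℓ' : (0 : ℝ) < ℓ := by exact_mod_cast hℓ
  have : 0 < (ℓ : ℝ) ^ 2 * (turningPoint ℓ m * (turningPoint ℓ m - t)) := by
    have := sub_pos.mpr htA
    have := ht0.trans_lt htA
    positivity
  linarith [Qlm_le_neg_mul_turningPoint hℓ ht0 htA]

lemma sqrt_abs_Qlm_sub_one_sub_le {ℓ : ℕ} {m : ℤ} {t : ℝ} (hℓ : 0 < ℓ) (hm1 : 1 ≤ m)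
    (hmℓ : m ≤ ℓ) (ht0 : 0 ≤ t) (ht : t ≤ 1 / 2) (htA : t < turningPoint ℓ m) :
    √|Qlm ℓ (m - 1) t| - √|Qlm ℓ m t| ≤
      3 / √(turningPoint ℓ m) * (√(turningPoint ℓ m - t))⁻¹ := by
  set A := turningPoint ℓ m
  have hℓ' : (0 : ℝ) < ℓ := by exact_mod_cast hℓ
  have hA : 0 < √A := sqrt_pos.mpr (ht0.trans_lt htA)
  have hAt : 0 < √(A - t) := sqrt_pos.mpr (sub_pos.mpr htA)
  have hlow : (ℓ : ℝ) ^ 2 * (A * (A - t)) ≤ -Qlm ℓ m t := by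
    linarith [Qlm_le_neg_mul_turningPoint hℓ ht0 htA]
  have hsqrt_low : ℓ * (√A * √(A - t)) ≤ √(-Qlm ℓ m t) := by
    rw [← sqrt_mul (ht0.trans htA.le), ← sqrt_sq hℓ'.le, ← sqrt_mul (sq_nonneg _)]
    exact sqrt_le_sqrt hlow
  have hQm : 0 < -Qlm ℓ m t := neg_pos.mpr (Qlm_neg_of_lt_turningPoint hℓ ht0 htA)
  have hmono := Qlm_sub_one_le_Qlm ℓ hm1 t
  have hdiff := Qlm_sub_Qlm_sub_one_le hmℓ (t := t) (by nlinarith)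
  rw [abs_of_neg (by linarith), abs_of_neg (by linarith)]
  calc √(-Qlm ℓ (m - 1) t) - √(-Qlm ℓ m t)
      ≤ (Qlm ℓ m t - Qlm ℓ (m - 1) t) / √(-Qlm ℓ m t) := by
        convert sqrt_sub_sqrt_le_div_sqrt hQm (neg_le_neg hmono) using 2
        ring
    _ ≤ 3 * ℓ / (ℓ * (√A * √(A - t))) :=
        div_le_div₀ (by positivity) hdiff (by positivity) hsqrt_low
    _ = 3 / √A * (√(A - t))⁻¹ := by field_simp

theorem Slm_sub_one_sub_Slm_mem_Icc {ℓ : ℕ} {m : ℤ} {θ : ℝ} (hℓ : 0 < ℓ) (hm1 : 1 ≤ m)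
    (hmℓ : m ≤ ℓ) (hθ0 : 0 ≤ θ) (hθ : θ ≤ 1 / 2) (hθA : θ < turningPoint ℓ m) :
    Slm ℓ (m - 1) θ - Slm ℓ m θ ∈ Icc 0 (6 * θ / turningPoint ℓ m) := by
  set A := turningPoint ℓ m
  have hθπ : θ ∈ Ioo (-(π / 2)) (π / 2) := ⟨by linarith [pi_pos], by linarith [pi_gt_three]⟩
  rw [Slm, Slm, ← intervalIntegral.integral_sub (intervalIntegrable_sqrt_abs_Qlm ℓ _ hθπ)
    (intervalIntegrable_sqrt_abs_Qlm ℓ _ hθπ)]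
  constructor
  · refine intervalIntegral.integral_nonneg hθ0 fun t ht => sub_nonneg.mpr (sqrt_le_sqrt ?_)
    have hQ := (Qlm_neg_of_lt_turningPoint hℓ ht.1 (ht.2.trans_lt hθA)).le
    rw [abs_of_nonpos hQ, abs_of_nonpos ((Qlm_sub_one_le_Qlm ℓ hm1 t).trans hQ)]
    linarith [Qlm_sub_one_le_Qlm ℓ hm1 t]
  · calc (∫ t in (0:ℝ)..θ, (√|Qlm ℓ (m - 1) t| - √|Qlm ℓ m t|))
        ≤ ∫ t in (0:ℝ)..θ, 3 / √A * (√(A - t))⁻¹ := by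
          refine intervalIntegral.integral_mono_on hθ0
            ((intervalIntegrable_sqrt_abs_Qlm ℓ _ hθπ).sub
              (intervalIntegrable_sqrt_abs_Qlm ℓ _ hθπ))
            ((intervalIntegrable_inv_sqrt_sub hθ0 hθA).const_mul _) fun t ht => ?_
          exact sqrt_abs_Qlm_sub_one_sub_le hℓ hm1 hmℓ ht.1 (ht.2.trans hθ) (ht.2.trans_lt hθA)
      _ ≤ 3 / √A * (2 * θ / √A) := by
          rw [intervalIntegral.integral_const_mul]
          gcongr
          exact integral_inv_sqrt_sub_le hθ0 hθA
      _ = 6 * θ / A := by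
          rw [div_mul_div_comm, mul_self_sqrt (hθ0.trans hθA.le)]
          ring

lemma two_sub_mul_div_le_one_sub_sq_div {n s ε x : ℝ} (hn : 0 < n) (hs : 0 ≤ s) (hx0 : 0 ≤ x)
    (hx : x ≤ n - s) (hsε : s ≤ ε * n) :
    (2 - ε) * (s / n) ≤ 1 - x ^ 2 / (n * (n + 1)) := by
  have hP : 0 < n * (n + 1) := by positivity
  rw [mul_div_assoc', le_sub_iff_add_le, div_add_div _ _ hn.ne' hP.ne', div_le_one (by positivity)]
  nlinarith [mul_le_mul hx hx hx0 (hx0.trans hx), mul_nonneg hs (sub_nonneg.mpr hsε)]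

lemma lt_turningPoint_and_le_mul {ℓ : ℕ} {m : ℤ} {s η θ : ℝ} (hℓ : 0 < ℓ) (hs : 0 < s)
    (hη : 0 ≤ η) (hη2 : η ^ 2 < 2) (hsη : 2 * s ≤ (2 - η ^ 2) * ℓ) (hm0 : 0 ≤ m)
    (hm : (m : ℝ) ≤ ℓ - s) (hθ : θ ≤ η * √(s / ℓ)) :
    θ < turningPoint ℓ m ∧ θ ≤ η * turningPoint ℓ m := by
  have hℓ' : (0 : ℝ) < ℓ := by exact_mod_cast hℓ
  have hx : 0 < s / ℓ := div_pos hs hℓ'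
  have hA : √((1 + η ^ 2 / 2) * (s / ℓ)) ≤ turningPoint ℓ m := by
    refine sqrt_le_sqrt ?_
    convert two_sub_mul_div_le_one_sub_sq_div (ε := 1 - η ^ 2 / 2) hℓ' hs.le
      (by exact_mod_cast hm0) hm (by linarith) using 2
    ring
  constructor
  · calc θ ≤ √(η ^ 2 * (s / ℓ)) := by rwa [sqrt_mul (sq_nonneg η), sqrt_sq hη]
      _ < √((1 + η ^ 2 / 2) * (s / ℓ)) := sqrt_lt_sqrt (by positivity) (by nlinarith)
      _ ≤ turningPoint ℓ m := hA
  · exact hθ.trans (mul_le_mul_of_nonneg_left ((sqrt_le_sqrt (by nlinarith)).trans hA) hη)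

lemma eventually_le_mul_of_tendsto_div_zero {r : ℕ → ℝ}
    (hr0 : Tendsto (fun ℓ : ℕ => r ℓ / (ℓ : ℝ)) atTop (nhds 0)) {c : ℝ} (hc : 0 < c) :
    ∀ᶠ ℓ : ℕ in atTop, r ℓ ≤ c * ℓ := by
  filter_upwards [hr0.eventually_lt_const hc, eventually_gt_atTop 0] with ℓ h hℓ
  rw [div_lt_iff₀ (by exact_mod_cast hℓ)] at h
  exact h.le

theorem stmt_8_general (r : ℕ → ℝ) (hrpos : ∀ ℓ, 0 < r ℓ)
    (hr0 : Tendsto (fun ℓ : ℕ => r ℓ / (ℓ : ℝ)) atTop (nhds 0)) :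
    ∃ C > (0:ℝ), ∀ η₂ : ℝ, 0 < η₂ → η₂ < Real.sqrt 2 →
      ∃ L : ℕ, 1 ≤ L ∧ ∀ ℓ : ℕ, L ≤ ℓ → ∀ m : ℤ,
        (ℓ : ℝ) - 2 * r ℓ ≤ (m : ℝ) → (m : ℝ) ≤ (ℓ : ℝ) - r ℓ →
        ∀ θ ∈ Set.Icc (0:ℝ) (η₂ * Real.sqrt (r ℓ / (ℓ : ℝ))),
          0 ≤ Slm ℓ (m - 1) θ - Slm ℓ m θ ∧ Slm ℓ (m - 1) θ - Slm ℓ m θ ≤ C * η₂ := by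
  refine ⟨6, by norm_num, fun η hη hη2 => ?_⟩
  have hηsq : η ^ 2 < 2 := by simpa using (lt_sqrt hη.le).mp hη2
  obtain ⟨L, hL⟩ := eventually_atTop.mp <|
    ((eventually_le_mul_of_tendsto_div_zero hr0 (c := 1 / 8) (by norm_num)).and
      (eventually_le_mul_of_tendsto_div_zero hr0 (c := 1 - η ^ 2 / 2) (by linarith))).and
      (eventually_ge_atTop 1)
  refine ⟨max L 1, le_max_right _ _, fun ℓ hℓ m hm_lb hm_ub θ ⟨hθ0, hθ⟩ => ?_⟩
  obtain ⟨⟨hr8, hrη⟩, hℓ1⟩ := hL ℓ (le_of_max_le_left hℓ)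
  have hℓpos : (0 : ℝ) < ℓ := by exact_mod_cast hℓ1
  have hm1 : 1 ≤ m := by
    have : (0 : ℝ) < m := by linarith
    exact_mod_cast this
  have hmℓ : m ≤ ℓ := by
    have : (m : ℝ) ≤ ℓ := by linarith [hrpos ℓ]
    exact_mod_cast this
  have hθ2 : θ ≤ 1 / 2 := by
    have hx : r ℓ / ℓ ≤ 1 / 8 := by rwa [div_le_iff₀ hℓpos]
    calc θ ≤ √(η ^ 2 * (r ℓ / ℓ)) := by rwa [sqrt_mul (sq_nonneg η), sqrt_sq hη.le]
      _ ≤ √((1 / 2) ^ 2) := sqrt_le_sqrt (by nlinarith [div_pos (hrpos ℓ) hℓpos])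
      _ = 1 / 2 := sqrt_sq (by norm_num)
  obtain ⟨hθA, hθηA⟩ := lt_turningPoint_and_le_mul hℓ1 (hrpos ℓ) hη.le hηsq (by linarith)
    (by omega) hm_ub hθ
  obtain ⟨hlow, hup⟩ := Slm_sub_one_sub_Slm_mem_Icc hℓ1 hm1 hmℓ hθ0 hθ2 hθA
  refine ⟨hlow, hup.trans ?_⟩
  rw [div_le_iff₀ (hθ0.trans_lt hθA)]
  linarith

theorem stmt_8 (r : ℕ → ℝ) (hrpos : ∀ ℓ, 0 < r ℓ)
    (hrinf : Tendsto r atTop atTop)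
    (hr0 : Tendsto (fun ℓ : ℕ => r ℓ / (ℓ : ℝ)) atTop (nhds 0)) :
    ∃ C > (0:ℝ), ∀ η₂ : ℝ, 0 < η₂ → η₂ < Real.sqrt 2 →
      ∃ L : ℕ, 1 ≤ L ∧ ∀ ℓ : ℕ, L ≤ ℓ → ∀ m : ℤ,
        (ℓ : ℝ) - 2 * r ℓ ≤ (m : ℝ) → (m : ℝ) ≤ (ℓ : ℝ) - r ℓ →
        ∀ θ ∈ Set.Icc (0:ℝ) (η₂ * Real.sqrt (r ℓ / (ℓ : ℝ))),
          0 ≤ Slm ℓ (m - 1) θ - Slm ℓ m θ ∧ Slm ℓ (m - 1) θ - Slm ℓ m θ ≤ C * η₂ :=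
  stmt_8_general r hrpos hr0
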